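/- Let φ : R → F be a homomorphism from an integral domain R to a field F, and p, q ∈ R[x] with φ(lc(p)) ≠ 0 and φ(lc(q)) ≠ 0 and deg p ≥ deg q ≥ 1. Then φ applied coefficientwise to the pseudo-remainder prem(p,q) equals, up to a nonzero scalar multiple, the pseudo-remainder of φ(p) by φ(q); in particular φ(prem(p,q))(a) = 0 for a root a of φ(q) if and only if φ(p)(a) = 0. -/
import Mathlib


open Polynomial

/-- Specialization property of pseudo-remainders (Mishra Cor. 7.5.6): if
`φ : R → F` does not kill the leading coefficients of `p` and `q`, then `φ`
applied coefficientwise to a pseudo-remainder of `p` by `q` equals, up to a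
nonzero scalar of `F`, a pseudo-remainder of `φ(p)` by `φ(q)`; in particular,
at any root `a` of `φ(q)`, the mapped pseudo-remainder vanishes iff `φ(p)` does. -/
theorem pseudo_remainder_specialization {R F : Type*} [CommRing R] [IsDomain R] [Field F]
    (φ : R →+* F) (p q : R[X])
    (hlp : φ p.leadingCoeff ≠ 0) (hlq : φ q.leadingCoeff ≠ 0)
    (hdeg : q.natDegree ≤ p.natDegree) (hq1 : 1 ≤ q.natDegree)
    (k : ℕ) (s r : R[X])
    (hpr : C q.leadingCoeff ^ k * p = s * q + r) (hr : r.degree < q.degree)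
    (k' : ℕ) (s' r' : F[X])
    (hpr' : C (q.map φ).leadingCoeff ^ k' * p.map φ = s' * q.map φ + r')
    (hr' : r'.degree < (q.map φ).degree) :
    (∃ c : F, c ≠ 0 ∧ (C c * r.map φ = r' ∨ r.map φ = C c * r')) ∧
      ∀ a : F, (q.map φ).eval a = 0 →
        ((r.map φ).eval a = 0 ↔ (p.map φ).eval a = 0) := by
  have hlq' : (q.map φ).leadingCoeff = φ q.leadingCoeff :=
    leadingCoeff_map_of_leadingCoeff_ne_zero φ hlq
  set c1 := φ q.leadingCoeff ^ k with hc1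
  set c2 := φ q.leadingCoeff ^ k' with hc2
  have hc1ne : c1 ≠ 0 := pow_ne_zero _ hlq
  have hc2ne : c2 ≠ 0 := pow_ne_zero _ hlq
  have hmap : C c1 * p.map φ = s.map φ * q.map φ + r.map φ := by
    have := congrArg (Polynomial.map φ) hpr
    simpa [Polynomial.map_mul, Polynomial.map_add, Polynomial.map_pow, map_C, hc1] using this
  have hpr'' : C c2 * p.map φ = s' * q.map φ + r' := by
    rw [hlq'] at hpr'
    simpa [map_pow, hc2] using hpr'
  have hqφ : q.map φ ≠ 0 := leadingCoeff_ne_zero.mp (by rw [hlq']; exact hlq)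
  have hrφ : (r.map φ).degree < (q.map φ).degree :=
    lt_of_le_of_lt ((degree_map_le : (r.map φ).degree ≤ r.degree))
      (by rw [degree_map_eq_of_leadingCoeff_ne_zero φ hlq]; exact hr)
  have key : C c2 * r.map φ - C c1 * r' = (C c1 * s' - C c2 * s.map φ) * q.map φ := by
    linear_combination (C c1) * hpr'' - (C c2) * hmap
  have hdegsub : (C c2 * r.map φ - C c1 * r').degree < (q.map φ).degree := by
    apply lt_of_le_of_lt (degree_sub_le _ _)
    apply max_lt
    · calc (C c2 * r.map φ).degree ≤ (C c2).degree + (r.map φ).degree := degree_mul_le _ _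
        _ = (r.map φ).degree := by rw [degree_C hc2ne, zero_add]
        _ < _ := hrφ
    · calc (C c1 * r').degree ≤ (C c1).degree + r'.degree := degree_mul_le _ _
        _ = r'.degree := by rw [degree_C hc1ne, zero_add]
        _ < _ := hr'
  have ht : C c1 * s' - C c2 * s.map φ = 0 := by
    by_contra ht
    rw [key, degree_mul] at hdegsub
    have h0 : (0 : WithBot ℕ) ≤ (C c1 * s' - C c2 * s.map φ).degree :=
      zero_le_degree_iff.mpr ht
    have := le_add_of_nonneg_left (a := (q.map φ).degree) h0
    exact absurd hdegsub (not_lt.mpr this)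
  have heq : C c2 * r.map φ = C c1 * r' := by
    have := key
    rw [ht, zero_mul, sub_eq_zero] at this
    exact this
  constructor
  · refine ⟨c2 / c1, div_ne_zero hc2ne hc1ne, Or.inl ?_⟩
    have hC : (C c1 : F[X]) ≠ 0 := by simpa using hc1ne
    apply mul_left_cancel₀ hC
    rw [← mul_assoc, ← C_mul, mul_div_cancel₀ _ hc1ne]
    exact heq
  · intro a ha
    have h := congrArg (eval a) hmap
    simp only [eval_mul, eval_add, eval_C, ha, mul_zero, zero_add] at h
    constructor
    · intro hz
      rw [hz] at h
      rcases mul_eq_zero.mp h with h1 | h1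
      · exact absurd h1 hc1ne
      · exact h1
    · intro hz
      rw [hz, mul_zero] at h
      exact h.symm
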